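/- arXiv:2005.13938 — 2 statements merged into one kernel-verified Lean document; each statement's English description precedes it below -/
import Mathlib

section
/- Let s ≥ 0 be an integer and let R be a finite tree with no induced subgraph isomorphic to sP₁ + P₃ such that |V(R)| > max{7, 4s−2}. Then R has exactly one vertex r of degree greater than 2, every vertex of degree 2 in R is adjacent to r, there are at most s−1 vertices of degree 2, and r has at least 3s−1 neighbours. -/
open SimpleGraph

/-- The graph `sP₁ + P₃`: the disjoint union of `s` isolated vertices and a path on
3 vertices. -/
def sP1P3 (s : ℕ) : SimpleGraph (Fin s ⊕ Fin 3) :=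
  SimpleGraph.fromRel (fun a b =>
    ∃ i j : Fin 3, a = Sum.inr i ∧ b = Sum.inr j ∧ (i : ℕ) + 1 = (j : ℕ))

/-- `G` is `H`-free: no induced subgraph of `G` is isomorphic to `H`. -/
def HFree {W V : Type*} (H : SimpleGraph W) (G : SimpleGraph V) : Prop :=
  IsEmpty (H ↪g G)

/-!
Colour the tree properly with two colours. Given an induced path `x - y - z`, the vertices of
one colour class that have no neighbour on the path form an independent set anticomplete to the
path, so `(sP₁ + P₃)`-freeness leaves fewer than `s` of them. This bounds the class opposite to
`y` by `s - 1 + deg y` and the class of `y` by `s - 2 + deg x + deg z`. As each colour class of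
a tree has degree sum `|V| - 1`, these bounds force, for a vertex `r` of maximum degree, that
`deg r ≥ 3` and that every other vertex of the class `A` of `r` is a leaf (otherwise
`|V| ≤ 4s - 2`). Then `r` is adjacent to the whole other class, and one more application of the
bounds gives `|A| ≤ s`, from which the conclusions follow by counting.
-/

open Finset

theorem Finset.sum_add_card_le_sum_add_card {ι : Type*} [DecidableEq ι] {f : ι → ℕ}
    {F T : Finset ι} (hFT : F ⊆ T) (hf : ∀ i ∈ T, 1 ≤ f i) :
    ∑ i ∈ F, f i + #T ≤ ∑ i ∈ T, f i + #F := by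
  rw [← sum_sdiff hFT, ← card_sdiff_add_card_eq_card hFT]
  have := card_nsmul_le_sum (T \ F) (fun i => f i) 1 fun i hi => hf i (sdiff_subset hi)
  simp only [smul_eq_mul, mul_one] at this
  omega

namespace SimpleGraph

variable {V : Type*} {R : SimpleGraph V}

lemma ncard_neighborSet_eq_degree {v : V} [Fintype (R.neighborSet v)] :
    (R.neighborSet v).ncard = R.degree v := by
  rw [← card_neighborFinset_eq_degree, ← Set.ncard_coe_finset, coe_neighborFinset]

lemma exists_adj_adj_ne_of_two_le_degree {v : V} [Fintype (R.neighborSet v)]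
    (h : 2 ≤ R.degree v) : ∃ x z, R.Adj v x ∧ R.Adj v z ∧ x ≠ z := by
  rw [← card_neighborFinset_eq_degree] at h
  obtain ⟨x, hx, z, hz, hxz⟩ := one_lt_card.1 h
  exact ⟨x, z, by simpa using hx, by simpa using hz, hxz⟩

lemma IsBipartiteWith.not_adj_of_mem_left {s t : Set V} (h : R.IsBipartiteWith s t) {u w : V}
    (hu : u ∈ s) (hw : w ∈ s) : ¬R.Adj u w :=
  fun huw => Set.disjoint_left.mp h.disjoint hw (h.mem_of_mem_adj hu huw)

lemma IsAcyclic.card_inter_neighborFinset_le_one [Fintype V] [DecidableEq V]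
    [DecidableRel R.Adj] (h : R.IsAcyclic) {u v : V} (huv : u ≠ v) :
    #(R.neighborFinset u ∩ R.neighborFinset v) ≤ 1 := by
  refine card_le_one.2 fun a ha b hb => ?_
  simp only [mem_inter, mem_neighborFinset] at ha hb
  have hpa : (Walk.cons ha.1 (Walk.cons ha.2.symm Walk.nil)).IsPath := by
    simp [ha.1.ne, ha.2.ne', huv]
  have hpb : (Walk.cons hb.1 (Walk.cons hb.2.symm Walk.nil)).IsPath := by
    simp [hb.1.ne, hb.2.ne', huv]
  simpa using congrArg (fun p : R.Path u v => p.1.getVert 1)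
    ((h.subsingleton_path u v).elim ⟨_, hpa⟩ ⟨_, hpb⟩)

lemma IsTree.exists_isBipartiteWith_compl [Fintype V] [DecidableEq V] (h : R.IsTree) (r : V) :
    ∃ A : Finset V, r ∈ A ∧ R.IsBipartiteWith ↑A ↑Aᶜ := by
  obtain ⟨C⟩ := h.colorable_two
  refine ⟨({v | C v = C r} : Finset V), by simp, ⟨by rw [coe_compl]; exact disjoint_compl_right,
    fun u w huw => ?_⟩⟩
  have := C.valid huw
  simp only [coe_filter, mem_univ, true_and, Set.mem_ofPred_eq, compl_filter]
  omega

theorem IsTree.two_le_maxDegree [Fintype V] [DecidableRel R.Adj] (h : R.IsTree)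
    (hn : 3 ≤ Fintype.card V) : 2 ≤ R.maxDegree := by
  have hsum := R.sum_degrees_eq_twice_card_edges
  have hle := sum_le_card_nsmul univ (fun v => R.degree v) R.maxDegree
    fun v _ => R.degree_le_maxDegree v
  have := h.card_edgeFinset
  simp only [card_univ, smul_eq_mul] at hle
  by_contra! hlt
  have : Fintype.card V * R.maxDegree ≤ Fintype.card V := by
    simpa using Nat.mul_le_mul_left (Fintype.card V) (Nat.le_of_lt_succ hlt)
  omega

end SimpleGraph

@[simp]
lemma sP1P3_adj_inl_left {s : ℕ} (i : Fin s) (a : Fin s ⊕ Fin 3) :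
    ¬(sP1P3 s).Adj (.inl i) a := by
  simp [sP1P3]

@[simp]
lemma sP1P3_adj_inl_right {s : ℕ} (a : Fin s ⊕ Fin 3) (i : Fin s) :
    ¬(sP1P3 s).Adj a (.inl i) := by
  simp [sP1P3]

lemma sP1P3_adj_inr_inr {s : ℕ} (i j : Fin 3) :
    (sP1P3 s).Adj (.inr i) (.inr j) ↔ (i : ℕ) + 1 = j ∨ (j : ℕ) + 1 = i := by
  simp only [sP1P3, fromRel_adj, ne_eq, Sum.inr.injEq, exists_and_left, exists_eq_left']
  omega

namespace HFree

variable {V : Type*} {R : SimpleGraph V} {s : ℕ} {A B : Finset V}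

theorem card_lt_of_isIndepSet (hfree : HFree (sP1P3 s) R) {x y z : V}
    (hxy : R.Adj x y) (hyz : R.Adj y z) (hxz : ¬R.Adj x z) (hne : x ≠ z) {S : Finset V}
    (hS : R.IsIndepSet S) (hSx : ∀ u ∈ S, ¬R.Adj u x) (hSy : ∀ u ∈ S, ¬R.Adj u y)
    (hSz : ∀ u ∈ S, ¬R.Adj u z) : #S < s := by
  by_contra! hs
  obtain ⟨g, hg⟩ := Function.Embedding.exists_of_card_le_finset (α := Fin s) (by simpa using hs)
  have hgS (i : Fin s) : g i ∈ S := hg ⟨i, rfl⟩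
  have hgP (i : Fin s) (j : Fin 3) : ¬R.Adj (g i) (![x, y, z] j) := by
    fin_cases j <;> simp [hSx _ (hgS i), hSy _ (hgS i), hSz _ (hgS i)]
  have hinj : Function.Injective ![x, y, z] := by
    intro i j h
    fin_cases i <;> fin_cases j <;> simp_all [hxy.ne, hyz.ne, hxy.ne', hyz.ne', hne.symm]
  have hdisj (i : Fin s) (j : Fin 3) : g i ≠ ![x, y, z] j := by
    intro h
    fin_cases j <;> simp only [Fin.zero_eta, Fin.mk_one, Fin.reduceFinMk, Matrix.cons_val] at h
    · exact hSy _ (hgS i) (h ▸ hxy)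
    · exact hSx _ (hgS i) (h ▸ hxy.symm)
    · exact hSy _ (hgS i) (h ▸ hyz.symm)
  refine hfree.false ⟨⟨Sum.elim g ![x, y, z], g.injective.sumElim hinj hdisj⟩, fun {a b} => ?_⟩
  change R.Adj (Sum.elim g ![x, y, z] a) (Sum.elim g ![x, y, z] b) ↔ _
  rcases a with i | i <;> rcases b with j | j
  · simpa using fun h => hS (hgS i) (hgS j) h.ne h
  · simpa using hgP i j
  · simpa [adj_comm] using hgP j i
  · simp only [Sum.elim_inr, sP1P3_adj_inr_inr]
    fin_cases i <;> fin_cases j <;> simp [hxy, hyz, hxz, adj_comm]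

theorem card_right_lt_add_degree [Fintype V] [DecidableRel R.Adj] (hfree : HFree (sP1P3 s) R)
    (hAB : R.IsBipartiteWith ↑A ↑B) {y : V} (hy : y ∈ A) (hdeg : 2 ≤ R.degree y) :
    #B < s + R.degree y := by
  obtain ⟨x, z, hyx, hyz, hxz⟩ := exists_adj_adj_ne_of_two_le_degree hdeg
  have hx : x ∈ B := hAB.mem_of_mem_adj hy hyx
  have hz : z ∈ B := hAB.mem_of_mem_adj hy hyz
  have hS := hfree.card_lt_of_isIndepSet hyx.symm hyz
    (hAB.symm.not_adj_of_mem_left hx hz) hxz (S := {u ∈ B | ¬R.Adj y u})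
    (fun u hu w hw _ => hAB.symm.not_adj_of_mem_left (mem_filter.1 hu).1 (mem_filter.1 hw).1)
    (fun u hu => hAB.symm.not_adj_of_mem_left (mem_filter.1 hu).1 hx)
    (fun u hu huy => (mem_filter.1 hu).2 huy.symm)
    (fun u hu => hAB.symm.not_adj_of_mem_left (mem_filter.1 hu).1 hz)
  have hsplit := card_filter_add_card_filter_not (s := B) (fun u => R.Adj y u)
  rw [← isBipartiteWith_neighborFinset hAB hy, card_neighborFinset_eq_degree] at hsplit
  omega

theorem card_left_add_one_lt_add_degree [Fintype V] [DecidableEq V] [DecidableRel R.Adj]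
    (hfree : HFree (sP1P3 s) R) (hAB : R.IsBipartiteWith ↑A ↑B) {x y z : V} (hy : y ∈ A)
    (hyx : R.Adj y x) (hyz : R.Adj y z) (hxz : x ≠ z) : #A + 1 < s + R.degree x + R.degree z := by
  have hS := hfree.card_lt_of_isIndepSet hyx.symm hyz
    (hAB.symm.not_adj_of_mem_left (hAB.mem_of_mem_adj hy hyx) (hAB.mem_of_mem_adj hy hyz)) hxz
    (S := {u ∈ A | ¬R.Adj x u ∧ ¬R.Adj z u})
    (fun u hu w hw _ => hAB.not_adj_of_mem_left (mem_filter.1 hu).1 (mem_filter.1 hw).1)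
    (fun u hu hux => (mem_filter.1 hu).2.1 hux.symm)
    (fun u hu => hAB.not_adj_of_mem_left (mem_filter.1 hu).1 hy)
    (fun u hu huz => (mem_filter.1 hu).2.2 huz.symm)
  have hcover : A ⊆ {u ∈ A | ¬R.Adj x u ∧ ¬R.Adj z u} ∪
      (R.neighborFinset x ∪ R.neighborFinset z) := by
    intro u hu
    by_cases hx : R.Adj x u <;> by_cases hz : R.Adj z u <;> simp [hu, hx, hz]
  have hy' : y ∈ R.neighborFinset x ∩ R.neighborFinset z := by simp [hyx.symm, hyz.symm]
  have := card_le_card hcover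
  have := card_union_le {u ∈ A | ¬R.Adj x u ∧ ¬R.Adj z u}
    (R.neighborFinset x ∪ R.neighborFinset z)
  have := card_union_add_card_inter (R.neighborFinset x) (R.neighborFinset z)
  have := card_pos.2 ⟨y, hy'⟩
  simp only [card_neighborFinset_eq_degree] at *
  omega

end HFree

namespace SimpleGraph

variable {V : Type*} [Fintype V] [DecidableEq V] {R : SimpleGraph V} [DecidableRel R.Adj]
  {s : ℕ} {A : Finset V} {r : V}

theorem IsTree.three_le_maxDegree (h : R.IsTree) (hfree : HFree (sP1P3 s) R)
    (hn : 2 * s + 3 < Fintype.card V) : 3 ≤ R.maxDegree := by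
  have : Nonempty V := Fintype.card_pos_iff.1 (by omega)
  obtain ⟨r, hr⟩ := R.exists_maximal_degree_vertex
  obtain ⟨A, hrA, hA⟩ := h.exists_isBipartiteWith_compl r
  have hr2 : 2 ≤ R.degree r := hr ▸ h.two_le_maxDegree (by omega)
  obtain ⟨x, z, hrx, hrz, hxz⟩ := exists_adj_adj_ne_of_two_le_degree hr2
  have := hfree.card_right_lt_add_degree hA hrA hr2
  have := hfree.card_left_add_one_lt_add_degree hA hrA hrx hrz hxz
  have := R.degree_le_maxDegree x
  have := R.degree_le_maxDegree z
  have := card_add_card_compl A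
  omega

theorem IsTree.card_add_two_le_of_mem_left (h : R.IsTree) (hfree : HFree (sP1P3 s) R)
    (hA : R.IsBipartiteWith ↑A ↑Aᶜ) {y : V} (hy : y ∈ A) (hr : r ∈ A)
    (hyr : y ≠ r) (hy2 : 2 ≤ R.degree y) (hr3 : 3 ≤ R.degree r) :
    Fintype.card V + 2 ≤ 4 * s := by
  have : Nontrivial V := ⟨⟨y, r, hyr⟩⟩
  have hdeg (v : V) : 1 ≤ R.degree v := h.connected.preconnected.degree_pos_of_nontrivial v
  obtain ⟨x, z, hyx, hyz, hxz⟩ := exists_adj_adj_ne_of_two_le_degree hy2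
  -- `y` and `r` share at most one neighbour, so four distinct neighbours are available
  have hpq : 1 < #(R.neighborFinset r \ R.neighborFinset y) := by
    have hsplit := card_sdiff_add_card_inter (R.neighborFinset r) (R.neighborFinset y)
    have hcommon := h.isAcyclic.card_inter_neighborFinset_le_one hyr.symm
    rw [card_neighborFinset_eq_degree] at hsplit
    omega
  obtain ⟨p, hp, q, hq, hpq⟩ := one_lt_card.1 hpq
  have hxz_sub : {x, z} ⊆ R.neighborFinset y := by simp [insert_subset_iff, hyx, hyz]
  have hpq_sub : {p, q} ⊆ R.neighborFinset r \ R.neighborFinset y := by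
    simp [insert_subset_iff, hp, hq]
  have hdisj : Disjoint ({x, z} : Finset V) {p, q} :=
    disjoint_of_subset_left hxz_sub (disjoint_of_subset_right hpq_sub disjoint_sdiff)
  simp only [mem_sdiff, mem_neighborFinset] at hp hq
  have hsumA := sum_add_card_le_sum_add_card (F := {y, r}) (T := A)
    (by simp [insert_subset_iff, hy, hr]) fun v _ => hdeg v
  have hsumB := sum_add_card_le_sum_add_card (F := {x, z} ∪ {p, q}) (T := Aᶜ)
    (union_subset (hxz_sub.trans (isBipartiteWith_neighborFinset_subset hA hy))
      ((hpq_sub.trans sdiff_subset).trans (isBipartiteWith_neighborFinset_subset hA hr)))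
    fun v _ => hdeg v
  rw [sum_pair hyr, card_pair hyr, isBipartiteWith_sum_degrees_eq_card_edges hA] at hsumA
  rw [sum_union hdisj, card_union_of_disjoint hdisj, sum_pair hxz, sum_pair hpq, card_pair hxz,
    card_pair hpq, isBipartiteWith_sum_degrees_eq_card_edges' hA] at hsumB
  have := hfree.card_right_lt_add_degree hA hy hy2
  have := hfree.card_right_lt_add_degree hA hr (by omega)
  have := hfree.card_left_add_one_lt_add_degree hA hy hyx hyz hxz
  have := hfree.card_left_add_one_lt_add_degree hA hr hp.1 hq.1 hpq
  have := h.card_edgeFinset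
  have := card_add_card_compl A
  omega

lemma mem_compl_of_two_le_degree (hleaf : ∀ v ∈ A, v ≠ r → R.degree v = 1) {v : V}
    (hvr : v ≠ r) (hv : 2 ≤ R.degree v) : v ∈ Aᶜ :=
  mem_compl.2 fun hvA => by
    have := hleaf v hvA hvr
    omega

theorem IsTree.neighborFinset_eq_compl (h : R.IsTree) (hA : R.IsBipartiteWith ↑A ↑Aᶜ)
    (hrA : r ∈ A) (hleaf : ∀ v ∈ A, v ≠ r → R.degree v = 1) : R.neighborFinset r = Aᶜ := by
  have hsum := isBipartiteWith_sum_degrees_eq_card_edges hA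
  rw [← add_sum_erase A _ hrA, sum_congr rfl fun v hv => hleaf v (mem_of_mem_erase hv)
    (ne_of_mem_erase hv), sum_const, card_erase_of_mem hrA, smul_eq_mul, mul_one] at hsum
  have := h.card_edgeFinset
  have := card_add_card_compl A
  have := card_pos.2 ⟨r, hrA⟩
  refine eq_of_subset_of_card_le (isBipartiteWith_neighborFinset_subset hA hrA) ?_
  rw [card_neighborFinset_eq_degree]
  omega

theorem IsTree.card_le_of_forall_degree_eq_one (h : R.IsTree) (hfree : HFree (sP1P3 s) R)
    (hA : R.IsBipartiteWith ↑A ↑Aᶜ) (hrA : r ∈ A) (hleaf : ∀ v ∈ A, v ≠ r → R.degree v = 1)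
    (hr3 : 3 ≤ R.degree r) (hn : 4 * s < Fintype.card V + 2) : #A ≤ s := by
  have hN := h.neighborFinset_eq_compl hA hrA hleaf
  have hrdeg : R.degree r = #Aᶜ := by rw [← card_neighborFinset_eq_degree, hN]
  have hsum := isBipartiteWith_sum_degrees_eq_card_edges' hA
  have := h.card_edgeFinset
  have := card_add_card_compl A
  by_cases hL : 1 < #{v ∈ Aᶜ | R.degree v = 1}
  · obtain ⟨p, hp, q, hq, hpq⟩ := one_lt_card.1 hL
    rw [mem_filter, ← hN, mem_neighborFinset] at hp hq
    have := hfree.card_left_add_one_lt_add_degree hA hrA hp.1 hq.1 hpq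
    omega
  · -- The non-leaf neighbours `Q` of `r` carry all leaves of `A`, so `#Aᶜ ≤ #Q + 1 ≤ #A`,
    -- and two of them give `#A ≤ 2s - 1`.
    obtain ⟨u, hru⟩ := (R.degree_pos_iff_exists_adj r).1 (by omega)
    have : Nontrivial V := nontrivial_of_ne r u hru.ne
    have hdeg (v : V) : 1 ≤ R.degree v := h.connected.preconnected.degree_pos_of_nontrivial v
    have hsplit := card_filter_add_card_filter_not (s := Aᶜ) (fun v => R.degree v = 1)
    obtain ⟨b, hb, b', hb', hbb'⟩ := one_lt_card.1 (by omega : 1 < #{v ∈ Aᶜ | ¬R.degree v = 1})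
    rw [mem_filter] at hb hb'
    have hb2 : 2 ≤ R.degree b := by have := hdeg b; omega
    have hb'2 : 2 ≤ R.degree b' := by have := hdeg b'; omega
    have hQ := card_nsmul_le_sum {v ∈ Aᶜ | ¬R.degree v = 1} (fun v => R.degree v) 2
      fun v hv => by have := hdeg v; have := (mem_filter.1 hv).2; omega
    have hsumQ := sum_add_card_le_sum_add_card (f := fun v => R.degree v)
      (filter_subset (fun v => ¬R.degree v = 1) Aᶜ) fun v _ => hdeg v
    have hsumb := sum_add_card_le_sum_add_card (F := {b, b'}) (T := Aᶜ)
      (by simp [insert_subset_iff, hb.1, hb'.1]) fun v _ => hdeg v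
    rw [sum_pair hbb', card_pair hbb'] at hsumb
    have := hfree.card_right_lt_add_degree hA.symm hb.1 hb2
    have := hfree.card_right_lt_add_degree hA.symm hb'.1 hb'2
    rw [smul_eq_mul] at hQ
    omega

theorem card_compl_le_of_three_le_degree (hfree : HFree (sP1P3 s) R)
    (hA : R.IsBipartiteWith ↑A ↑Aᶜ) (hleaf : ∀ v ∈ A, v ≠ r → R.degree v = 1) {v : V}
    (hv : v ∈ Aᶜ) (hv3 : 3 ≤ R.degree v) : #Aᶜ ≤ s := by
  have hchildren : 1 < #((R.neighborFinset v).erase r) := by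
    have := pred_card_le_card_erase (s := R.neighborFinset v) (a := r)
    rw [card_neighborFinset_eq_degree] at this
    omega
  obtain ⟨x, hx, z, hz, hxz⟩ := one_lt_card.1 hchildren
  rw [mem_erase, mem_neighborFinset] at hx hz
  have := hfree.card_left_add_one_lt_add_degree hA.symm hv hx.2 hz.2 hxz
  rw [hleaf x (hA.symm.mem_of_mem_adj hv hx.2) hx.1,
    hleaf z (hA.symm.mem_of_mem_adj hv hz.2) hz.1] at this
  omega

theorem IsTree.card_filter_degree_eq_two_lt (h : R.IsTree) (hA : R.IsBipartiteWith ↑A ↑Aᶜ)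
    (hleaf : ∀ v ∈ A, v ≠ r → R.degree v = 1) (hr3 : 3 ≤ R.degree r) :
    #{v | R.degree v = 2} < #A := by
  obtain ⟨u, hru⟩ := (R.degree_pos_iff_exists_adj r).1 (by omega)
  have : Nontrivial V := nontrivial_of_ne r u hru.ne
  have hdeg (v : V) : 1 ≤ R.degree v := h.connected.preconnected.degree_pos_of_nontrivial v
  have hsub : ({v | R.degree v = 2} : Finset V) ⊆ Aᶜ := by
    intro v hv
    rw [mem_filter] at hv
    exact mem_compl_of_two_le_degree hleaf (by rintro rfl; omega) hv.2.ge
  have hsum := sum_add_card_le_sum_add_card (f := fun v => R.degree v) hsub fun v _ => hdeg v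
  rw [sum_const_nat fun v hv => (mem_filter.1 hv).2,
    isBipartiteWith_sum_degrees_eq_card_edges' hA] at hsum
  have := h.card_edgeFinset
  have := card_add_card_compl A
  omega

end SimpleGraph

open SimpleGraph Finset in
theorem stmt_6 {V : Type*} [Fintype V] (s : ℕ) (R : SimpleGraph V)
    (htree : R.IsTree) (hfree : HFree (sP1P3 s) R)
    (hbig : max 7 (4 * s - 2) < Fintype.card V) :
    ∃ r : V,
      2 < (R.neighborSet r).ncard ∧
      (∀ v : V, 2 < (R.neighborSet v).ncard → v = r) ∧
      (∀ v : V, (R.neighborSet v).ncard = 2 → R.Adj v r) ∧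
      {v : V | (R.neighborSet v).ncard = 2}.ncard ≤ s - 1 ∧
      3 * s - 1 ≤ (R.neighborSet r).ncard := by
  classical
  have hn : 2 * s + 3 < Fintype.card V ∧ 4 * s < Fintype.card V + 2 := by omega
  have : Nontrivial V := Fintype.one_lt_card_iff_nontrivial.1 (by omega)
  obtain ⟨r, hr⟩ := R.exists_maximal_degree_vertex
  obtain ⟨A, hrA, hA⟩ := htree.exists_isBipartiteWith_compl r
  have hr3 : 3 ≤ R.degree r := hr ▸ htree.three_le_maxDegree hfree hn.1
  have hleaf (v : V) (hvA : v ∈ A) (hvr : v ≠ r) : R.degree v = 1 := by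
    have := htree.connected.preconnected.degree_pos_of_nontrivial v
    have := mt (htree.card_add_two_le_of_mem_left hfree hA hvA hrA hvr · hr3)
    omega
  have hN := htree.neighborFinset_eq_compl hA hrA hleaf
  have hAs := htree.card_le_of_forall_degree_eq_one hfree hA hrA hleaf hr3 hn.2
  have hrdeg : R.degree r = #Aᶜ := by rw [← card_neighborFinset_eq_degree, hN]
  have := card_add_card_compl A
  simp_rw [ncard_neighborSet_eq_degree, Set.ncard_eq_toFinset_card', Set.toFinset_ofPred]
  refine ⟨r, by omega, fun v hv => ?_, fun v hv => ?_, ?_, by omega⟩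
  · by_contra hvr
    have := card_compl_le_of_three_le_degree hfree hA hleaf
      (mem_compl_of_two_le_degree hleaf hvr hv.le) hv
    omega
  · have hvr : v ≠ r := by rintro rfl; omega
    simpa [← hN, adj_comm] using mem_compl_of_two_le_degree hleaf hvr hv.ge
  · have := htree.card_filter_degree_eq_two_lt hA hleaf hr3
    omega
end

section
/- Let G be a finite simple (sP₁+P₃)-free graph for s ≥ 1, let T ⊆ V(G), let F induce a T-forest, and let A ⊆ F ∩ T induce a graph with exactly 2s components each isomorphic to P₁ or P₂. Then each component of G[A] has at most one neighbour in the set Y₁ of vertices of F \ A with exactly one neighbour in A; consequently |Y₁| ≤ 2s. -/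
open SimpleGraph

/-- `F` induces a `T`-forest: `G[F]` has no cycle containing a vertex of `T`. -/
def InducesTForest {V : Type*} (G : SimpleGraph V) (T F : Set V) : Prop :=
  ∀ (u : V) (c : G.Walk u u), c.IsCycle → (∀ v ∈ c.support, v ∈ F) →
    ∀ t ∈ T, t ∉ c.support

lemma triangle_isCycle' {V : Type*} {G : SimpleGraph V} {u v w : V} (huv : G.Adj u v)
    (hvw : G.Adj v w) (hwu : G.Adj w u) (hne : u ≠ w) :
    (Walk.cons huv (Walk.cons hvw (Walk.cons hwu Walk.nil))).IsCycle := by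
  have h1 := huv.ne
  have h2 := hvw.ne
  simp [Walk.isCycle_def, Walk.isTrail_def, Sym2.eq_iff]
  tauto

lemma sP1P3_adj_inr' {s : ℕ} (i j : Fin 3) :
    (sP1P3 s).Adj (Sum.inr i) (Sum.inr j) ↔ ((i : ℕ) + 1 = j ∨ (j : ℕ) + 1 = i) := by
  simp only [sP1P3, fromRel_adj, ne_eq, Sum.inr.injEq]
  constructor
  · rintro ⟨hne, h⟩
    rcases h with ⟨i', j', h1, h2, h3⟩ | ⟨i', j', h1, h2, h3⟩ <;> simp_all
  · intro h
    refine ⟨?_, ?_⟩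
    · rintro rfl; omega
    · rcases h with h | h
      · exact Or.inl ⟨i, j, rfl, rfl, h⟩
      · exact Or.inr ⟨j, i, rfl, rfl, h⟩

lemma sP1P3_not_adj_inl' {s : ℕ} (i : Fin s) (u : Fin s ⊕ Fin 3) :
    ¬ (sP1P3 s).Adj (Sum.inl i) u ∧ ¬ (sP1P3 s).Adj u (Sum.inl i) := by
  constructor <;>
  · rintro ⟨hne, (⟨i', j', h1, h2, h3⟩ | ⟨i', j', h1, h2, h3⟩)⟩ <;> simp_all

lemma embed_false {V : Type*} [Fintype V] {s : ℕ} (hs : 1 ≤ s)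
    {G : SimpleGraph V} (hfree : HFree (sP1P3 s) G)
    {A : Set V}
    (hcomp : Nat.card ((G.induce A).ConnectedComponent) = 2 * s)
    (C₀ : (G.induce A).ConnectedComponent)
    {x a z : V}
    (hxz : x ≠ z) (hxa : G.Adj x a) (haz : G.Adj a z) (hnxz : ¬ G.Adj x z)
    (hxN : ∀ w : A, G.Adj x ↑w → (G.induce A).connectedComponentMk w = C₀)
    (haN : ∀ w : A, G.Adj a ↑w → (G.induce A).connectedComponentMk w = C₀)
    (hzN : ∀ w : A, G.Adj z ↑w → (G.induce A).connectedComponentMk w = C₀)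
    (hxM : ∀ h : x ∈ A, (G.induce A).connectedComponentMk ⟨x, h⟩ = C₀)
    (haM : ∀ h : a ∈ A, (G.induce A).connectedComponentMk ⟨a, h⟩ = C₀)
    (hzM : ∀ h : z ∈ A, (G.induce A).connectedComponentMk ⟨z, h⟩ = C₀) :
    False := by
  classical
  haveI : Fintype ((G.induce A).ConnectedComponent) := Fintype.ofFinite _
  have hcard : Fintype.card (Fin s) ≤
      Fintype.card {C : (G.induce A).ConnectedComponent // ¬ C = C₀} := by
    have h1 : Fintype.card ((G.induce A).ConnectedComponent) = 2 * s := by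
      rw [← Nat.card_eq_fintype_card, hcomp]
    have h2 := Fintype.card_subtype_compl (fun C : (G.induce A).ConnectedComponent => C = C₀)
    rw [Fintype.card_subtype_eq] at h2
    rw [Fintype.card_fin]
    omega
  obtain ⟨g⟩ := Function.Embedding.nonempty_of_card_le hcard
  have hrep : ∀ C : (G.induce A).ConnectedComponent,
      ∃ v : ↥A, (G.induce A).connectedComponentMk v = C := fun C => C.exists_rep
  choose r hr using hrep
  have hdiff : ∀ i : Fin s, ¬ (G.induce A).connectedComponentMk (r (g i)) = C₀ := by
    intro i; rw [hr]; exact (g i).2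
  have hAdjA : ∀ w w' : ↥A, G.Adj ↑w ↑w' →
      (G.induce A).connectedComponentMk w = (G.induce A).connectedComponentMk w' := by
    intro w w' h
    exact ConnectedComponent.sound ((show (G.induce A).Adj w w' from h).reachable)
  have hne3 : ∀ (i : Fin s) (v : V),
      (∀ h : v ∈ A, (G.induce A).connectedComponentMk ⟨v, h⟩ = C₀) →
      (↑(r (g i)) : V) ≠ v := by
    intro i v hv e
    apply hdiff i
    have hvA : v ∈ A := e ▸ (r (g i)).2
    have : r (g i) = ⟨v, hvA⟩ := Subtype.ext e
    rw [this]; exact hv hvA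
  have hnadj3 : ∀ (i : Fin s) (v : V),
      (∀ w : A, G.Adj v ↑w → (G.induce A).connectedComponentMk w = C₀) →
      ¬ G.Adj v ↑(r (g i)) := fun i v hv h => hdiff i (hv _ h)
  have hrepne : ∀ i j : Fin s, i ≠ j →
      (↑(r (g i)) : V) ≠ ↑(r (g j)) ∧ ¬ G.Adj ↑(r (g i)) ↑(r (g j)) := by
    intro i j hij
    have hmk : ¬ (G.induce A).connectedComponentMk (r (g i)) =
        (G.induce A).connectedComponentMk (r (g j)) := by
      rw [hr, hr]
      intro e
      exact hij (g.injective (Subtype.ext e))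
    exact ⟨fun e => hmk (by rw [Subtype.ext e]), fun h => hmk (hAdjA _ _ h)⟩
  let p : Fin 3 → V := ![x, a, z]
  let f : Fin s ⊕ Fin 3 → V := Sum.elim (fun i => ↑(r (g i))) p
  have hxa' := hxa.ne
  have haz' := haz.ne
  have hinj : Function.Injective f := by
    rintro (i | i) (j | j) h
    · by_contra hij
      exact ((hrepne i j (fun e => hij (by rw [e]))).1) h
    · exfalso; fin_cases j
      · exact hne3 i x hxM h
      · exact hne3 i a haM h
      · exact hne3 i z hzM h
    · exfalso; fin_cases i
      · exact hne3 j x hxM h.symm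
      · exact hne3 j a haM h.symm
      · exact hne3 j z hzM h.symm
    · fin_cases i <;> fin_cases j <;>
        first
        | rfl
        | exact absurd h hxa'
        | exact absurd h haz'
        | exact absurd h hxz
        | exact absurd h.symm hxa'
        | exact absurd h.symm haz'
        | exact absurd h.symm hxz
  have hmri : ∀ u v, G.Adj (f u) (f v) ↔ (sP1P3 s).Adj u v := by
    rintro (i | i) (j | j)
    · constructor
      · intro h
        exfalso
        rcases eq_or_ne i j with rfl | hij
        · exact G.irrefl h
        · exact (hrepne i j hij).2 h
      · intro h; exact absurd h (sP1P3_not_adj_inl' i _).1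
    · constructor
      · intro h
        exfalso
        fin_cases j
        · exact hnadj3 i x hxN h.symm
        · exact hnadj3 i a haN h.symm
        · exact hnadj3 i z hzN h.symm
      · intro h; exact absurd h (sP1P3_not_adj_inl' i _).1
    · constructor
      · intro h
        exfalso
        fin_cases i
        · exact hnadj3 j x hxN h
        · exact hnadj3 j a haN h
        · exact hnadj3 j z hzN h
      · intro h; exact absurd h (sP1P3_not_adj_inl' j _).2
    · rw [sP1P3_adj_inr']
      fin_cases i <;> fin_cases j <;>
        first
        | exact iff_of_false (G.irrefl) (by decide)
        | exact iff_of_true hxa (by decide)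
        | exact iff_of_true hxa.symm (by decide)
        | exact iff_of_true haz (by decide)
        | exact iff_of_true haz.symm (by decide)
        | exact iff_of_false hnxz (by decide)
        | exact iff_of_false (fun h => hnxz h.symm) (by decide)
  have hE : IsEmpty (sP1P3 s ↪g G) := hfree
  exact hE.false ⟨⟨f, hinj⟩, hmri _ _⟩


theorem stmt_13 {V : Type*} [Fintype V] (s : ℕ) (hs : 1 ≤ s)
    (G : SimpleGraph V) (hfree : HFree (sP1P3 s) G)
    (T F : Set V) (hF : InducesTForest G T F)
    (A : Set V) (hA : A ⊆ F ∩ T)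
    (hcomp : Nat.card ((G.induce A).ConnectedComponent) = 2 * s)
    (hsize : ∀ C : (G.induce A).ConnectedComponent,
      C.supp.ncard = 1 ∨ C.supp.ncard = 2) :
    (∀ C : (G.induce A).ConnectedComponent,
        {y : V | y ∈ F \ A ∧ (A ∩ G.neighborSet y).ncard = 1 ∧
          ∃ a ∈ C.supp, G.Adj y (a : V)}.ncard ≤ 1) ∧
      {y : V | y ∈ F \ A ∧ (A ∩ G.neighborSet y).ncard = 1}.ncard ≤ 2 * s := by
  classical
  have hAdjA : ∀ w w' : ↥A, G.Adj ↑w ↑w' →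
      (G.induce A).connectedComponentMk w = (G.induce A).connectedComponentMk w' := by
    intro w w' h
    exact ConnectedComponent.sound ((show (G.induce A).Adj w w' from h).reachable)
  have key : ∀ C : (G.induce A).ConnectedComponent,
      ∀ y₁ ∈ {y : V | y ∈ F \ A ∧ (A ∩ G.neighborSet y).ncard = 1 ∧
          ∃ a ∈ C.supp, G.Adj y (a : V)},
      ∀ y₂ ∈ {y : V | y ∈ F \ A ∧ (A ∩ G.neighborSet y).ncard = 1 ∧
          ∃ a ∈ C.supp, G.Adj y (a : V)}, y₁ = y₂ := by
    intro C y₁ hy₁ y₂ hy₂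
    obtain ⟨hyF1, hn1, a₁, ha₁C, hadj1⟩ := hy₁
    obtain ⟨hyF2, hn2, a₂, ha₂C, hadj2⟩ := hy₂
    obtain ⟨b₁, hb₁⟩ := Set.ncard_eq_one.mp hn1
    obtain ⟨b₂, hb₂⟩ := Set.ncard_eq_one.mp hn2
    have huniq1 : ∀ v : V, v ∈ A → G.Adj y₁ v → v = ↑a₁ := by
      intro v hvA hvadj
      have h1 : v ∈ A ∩ G.neighborSet y₁ := ⟨hvA, hvadj⟩
      have h2 : (↑a₁ : V) ∈ A ∩ G.neighborSet y₁ := ⟨a₁.2, hadj1⟩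
      rw [hb₁, Set.mem_singleton_iff] at h1 h2
      rw [h1, h2]
    have huniq2 : ∀ v : V, v ∈ A → G.Adj y₂ v → v = ↑a₂ := by
      intro v hvA hvadj
      have h1 : v ∈ A ∩ G.neighborSet y₂ := ⟨hvA, hvadj⟩
      have h2 : (↑a₂ : V) ∈ A ∩ G.neighborSet y₂ := ⟨a₂.2, hadj2⟩
      rw [hb₂, Set.mem_singleton_iff] at h1 h2
      rw [h1, h2]
    have hxN1 : ∀ w : A, G.Adj y₁ ↑w → (G.induce A).connectedComponentMk w = C := by
      intro w hw
      have hww : w = a₁ := Subtype.ext (huniq1 ↑w w.2 hw)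
      rw [hww]; exact ha₁C
    have haN1 : ∀ w : A, G.Adj ↑a₁ ↑w → (G.induce A).connectedComponentMk w = C := by
      intro w hw
      exact (hAdjA w a₁ hw.symm).trans ha₁C
    have haM1 : ∀ h : (↑a₁ : V) ∈ A, (G.induce A).connectedComponentMk ⟨↑a₁, h⟩ = C := by
      intro h
      have : (⟨↑a₁, h⟩ : ↥A) = a₁ := Subtype.ext rfl
      rw [this]; exact ha₁C
    rcases eq_or_ne a₁ a₂ with heq | hne
    · -- same attachment vertex
      subst heq
      by_cases hadj12 : G.Adj y₁ y₂
      · -- triangle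
        by_contra hne12
        have hcyc := triangle_isCycle' hadj1 hadj2.symm hadj12.symm hne12
        have hsupp : ∀ v ∈ (Walk.cons hadj1 (Walk.cons hadj2.symm
            (Walk.cons hadj12.symm Walk.nil))).support, v ∈ F := by
          intro v hv
          simp only [Walk.support_cons, Walk.support_nil, List.mem_cons,
            List.not_mem_nil, or_false] at hv
          rcases hv with rfl | rfl | rfl | rfl
          · exact hyF1.1
          · exact (hA a₁.2).1
          · exact hyF2.1
          · exact hyF1.1
        have := hF y₁ _ hcyc hsupp ↑a₁ (hA a₁.2).2
        apply this
        simp [Walk.support_cons]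
      · by_contra hne12
        refine embed_false hs hfree hcomp C (x := y₁) (a := ↑a₁) (z := y₂)
          hne12 hadj1 hadj2.symm hadj12 hxN1 haN1 ?_ ?_ haM1 ?_
        · intro w hw
          have hww : w = a₁ := Subtype.ext (huniq2 ↑w w.2 hw)
          rw [hww]; exact ha₁C
        · exact fun h => absurd h hyF1.2
        · exact fun h => absurd h hyF2.2
    · exfalso
      -- C.supp = {a₁, a₂} and a₁ ~ a₂
      have hsub : ({a₁, a₂} : Set ↥A) ⊆ C.supp := by
        rintro w (rfl | rfl)
        · exact ha₁C
        · exact ha₂C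
      have hpair : ({a₁, a₂} : Set ↥A).ncard = 2 := Set.ncard_pair hne
      have hsupp_eq : ({a₁, a₂} : Set ↥A) = C.supp := by
        rcases hsize C with h1 | h2
        · exfalso
          obtain ⟨c, hc⟩ := Set.ncard_eq_one.mp h1
          rw [hc] at hsub
          have e1 : a₁ = c := hsub (by simp)
          have e2 : a₂ = c := hsub (by simp)
          exact hne (e1.trans e2.symm)
        · exact Set.eq_of_subset_of_ncard_le hsub (by rw [hpair, h2]) (Set.toFinite _)
      obtain ⟨pw⟩ := (ConnectedComponent.eq).mp
        ((ha₁C : (G.induce A).connectedComponentMk a₁ = C).trans ha₂C.symm)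
      have hadjA12 : G.Adj ↑a₁ ↑a₂ := by
        cases pw with
        | nil => exact absurd rfl hne
        | @cons _ b _ hstep q =>
          have hbC : b ∈ C.supp := by
            rw [ConnectedComponent.mem_supp_iff]
            exact (ConnectedComponent.sound hstep.symm.reachable).trans ha₁C
          rw [← hsupp_eq] at hbC
          rcases hbC with rfl | rfl
          · exact absurd hstep ((G.induce A).irrefl)
          · exact hstep
      have hny₁a₂ : ¬ G.Adj y₁ ↑a₂ := fun h => hne (Subtype.ext (huniq1 _ a₂.2 h)).symm
      refine embed_false hs hfree hcomp C (x := y₁) (a := ↑a₁) (z := ↑a₂)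
        (fun e => hyF1.2 (e.symm ▸ a₂.2)) hadj1 hadjA12 hny₁a₂ hxN1 haN1 ?_ ?_ haM1 ?_
      · intro w hw
        exact (hAdjA w a₂ hw.symm).trans ha₂C
      · exact fun h => absurd h hyF1.2
      · intro h
        have : (⟨↑a₂, h⟩ : ↥A) = a₂ := Subtype.ext rfl
        rw [this]; exact ha₂C
  constructor
  · intro C
    rw [Set.ncard_le_one (Set.toFinite _)]
    exact key C
  · have hex : ∀ y : ↥{y : V | y ∈ F \ A ∧ (A ∩ G.neighborSet y).ncard = 1},
        ∃ w : V, w ∈ A ∧ G.Adj ↑y w ∧ True := by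
      intro y
      obtain ⟨b, hb⟩ := Set.ncard_eq_one.mp y.2.2
      have hbmem : b ∈ A ∩ G.neighborSet ↑y := by rw [hb]; exact Set.mem_singleton b
      exact ⟨b, hbmem.1, hbmem.2, trivial⟩
    choose w hwA hwadj _ using hex
    haveI : Finite ((G.induce A).ConnectedComponent) := Finite.of_fintype _
    have hinj : Function.Injective
        (fun y : ↥{y : V | y ∈ F \ A ∧ (A ∩ G.neighborSet y).ncard = 1} =>
          (G.induce A).connectedComponentMk ⟨w y, hwA y⟩) := by
      intro y₁ y₂ he
      simp only at he
      apply Subtype.ext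
      refine key ((G.induce A).connectedComponentMk ⟨w y₁, hwA y₁⟩) ↑y₁
        ⟨y₁.2.1, y₁.2.2, ⟨w y₁, hwA y₁⟩, rfl, hwadj y₁⟩ ↑y₂
        ⟨y₂.2.1, y₂.2.2, ⟨w y₂, hwA y₂⟩, he.symm, hwadj y₂⟩
    have hle := Nat.card_le_card_of_injective _ hinj
    rw [Nat.card_coe_set_eq] at hle
    calc {y : V | y ∈ F \ A ∧ (A ∩ G.neighborSet y).ncard = 1}.ncard
        ≤ Nat.card ((G.induce A).ConnectedComponent) := hle
      _ = 2 * s := hcomp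
end
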